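/- Let Γ be a countable residually finite discrete group and f ∈ ℤΓ such that the action α_f on X_f is expansive, i.e. f is invertible in ℓ¹(Γ) with inverse w_f^Δ = f⁻¹. Then the point x_f^Δ = η((w_f^Δ)*) ∈ X_f is a fundamental homoclinic point of α_f. -/

import Mathlib

open scoped BigOperators symmDiff Pointwise

noncomputable section

/-- The additive circle `𝕋 = ℝ/ℤ`. -/
abbrev Torus : Type := AddCircle (1 : ℝ)

section GroupDefs

variable {Γ : Type*} [Group Γ]

/-- For `f ∈ ℤΓ`, the map `ρ_f : 𝕋^Γ → 𝕋^Γ`, `(ρ_f x)_{γ'} = Σ_γ f_γ • x_{γ'γ}`. -/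
def rhoT (f : Γ →₀ ℤ) (x : Γ → Torus) : Γ → Torus :=
  fun γ' => f.sum fun γ c => c • x (γ' * γ)

/-- The compact abelian group `X_f = ker ρ_f ⊆ 𝕋^Γ` (as a subset). -/
def XSet (f : Γ →₀ ℤ) : Set (Γ → Torus) := {x | rhoT f x = 0}

/-- The left shift `(λ^γ x)_{γ'} = x_{γ⁻¹ γ'}` on `𝕋^Γ`; restricted to `X_f` this is `α_f^γ`. -/
def lsh (γ : Γ) (x : Γ → Torus) : Γ → Torus := fun γ' => x (γ⁻¹ * γ')

/-- The left shift `(λ^γ w)_{γ'} = w_{γ⁻¹ γ'}` on real-valued functions. -/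
def lshR (γ : Γ) (w : Γ → ℝ) : Γ → ℝ := fun γ' => w (γ⁻¹ * γ')

/-- Expansiveness of the `Γ`-action `α_f` on `X_f`: there is an open neighbourhood `U`
of `0` such that the only point of `X_f` all of whose translates stay in `U` is `0`
(equivalently, `⋂_γ α_f^γ (U ∩ X_f) = {0}`). -/
def ExpansiveAction (f : Γ →₀ ℤ) : Prop :=
  ∃ U : Set (Γ → Torus), IsOpen U ∧ {x | x ∈ XSet f ∧ ∀ γ : Γ, lsh γ x ∈ U} = {0}

/-- `w ∈ ℓ∞(Γ)`: boundedness of a real-valued function. -/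
def Bdd (w : Γ → ℝ) : Prop := ∃ C : ℝ, ∀ γ : Γ, |w γ| ≤ C

/-- `w ∈ ℓ∞(Γ,ℤ)`: all values are integers. -/
def IntValued (w : Γ → ℝ) : Prop := ∀ γ : Γ, ∃ k : ℤ, w γ = (k : ℝ)

/-- For `f ∈ ℤΓ`, the operator `ρ_f` on `ℓ∞(Γ)`: `(ρ_f w)_γ = Σ_{γ'} w_{γγ'} f_{γ'}`. -/
def rhoInf (f : Γ →₀ ℤ) (w : Γ → ℝ) : Γ → ℝ :=
  fun γ => f.sum fun γ' c => (c : ℝ) * w (γ * γ')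

/-- For `h ∈ ℓ¹(Γ)`, the operator `ρ_h` on `ℓ∞(Γ)`: `(ρ_h w)_γ = Σ_{γ'} w_{γγ'} h_{γ'}`. -/
def rhoL1 (h : Γ → ℝ) (w : Γ → ℝ) : Γ → ℝ :=
  fun γ => ∑' γ' : Γ, w (γ * γ') * h γ'

/-- Convolution on `ℓ¹(Γ)`: `(g·h)_γ = Σ_{γ'} g_{γ'} h_{γ'⁻¹γ}`. -/
def conv (g h : Γ → ℝ) : Γ → ℝ := fun γ => ∑' γ' : Γ, g γ' * h (γ'⁻¹ * γ)

/-- Convolution on `ℓ¹(Γ,ℂ)`. -/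
def convC (g h : Γ → ℂ) : Γ → ℂ := fun γ => ∑' γ' : Γ, g γ' * h (γ'⁻¹ * γ)

open Classical in
/-- The unit `δ₁` of the convolution algebra `ℓ¹(Γ)`. -/
def deltaOne : Γ → ℝ := fun γ => if γ = 1 then 1 else 0

open Classical in
/-- The unit `δ₁` of `ℓ¹(Γ,ℂ)`. -/
def deltaOneC : Γ → ℂ := fun γ => if γ = 1 then 1 else 0

/-- `g` is a two-sided convolution inverse of `f` in `ℓ¹(Γ)`. -/
def IsL1Inverse (f g : Γ → ℝ) : Prop :=
  Summable g ∧ conv f g = deltaOne ∧ conv g f = deltaOne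

/-- View `f ∈ ℤΓ` as an element of `ℓ¹(Γ)`. -/
def fR (f : Γ →₀ ℤ) : Γ → ℝ := fun γ => (f γ : ℝ)

/-- View `f ∈ ℤΓ` as an element of `ℓ¹(Γ,ℂ)`. -/
def fCC (f : Γ →₀ ℤ) : Γ → ℂ := fun γ => (f γ : ℂ)

/-- The `ℓ¹`-norm `‖f‖₁` of `f ∈ ℤΓ`. -/
def finsuppL1 (f : Γ →₀ ℤ) : ℝ := f.sum fun _ c => |(c : ℝ)|

/-- The `ℓ¹`-norm of `h ∈ ℓ¹(Γ,ℂ)`. -/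
def l1normC (h : Γ → ℂ) : ℝ := ∑' γ : Γ, ‖h γ‖

/-- Coordinatewise reduction mod 1, `η : ℓ∞(Γ) → 𝕋^Γ`. -/
def etaT (w : Γ → ℝ) : Γ → Torus := fun γ => ((w γ : ℝ) : Torus)

/-- The map `ξ = η ∘ ρ_{w}` for `w ∈ ℓ¹(Γ)`. -/
def xiMap (w : Γ → ℝ) (v : Γ → ℝ) : Γ → Torus := etaT (rhoL1 w v)

/-- A point `x ∈ 𝕋^Γ` is homoclinic if `λ^γ x → 0` along the cofinite filter on `Γ`. -/
def IsHomoclinic (x : Γ → Torus) : Prop :=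
  Filter.Tendsto (fun γ : Γ => lsh γ x) Filter.cofinite (nhds 0)

/-- The set of `Γ'`-fixed points of `α_f` in `X_f`. -/
def FixSet (f : Γ →₀ ℤ) (Γ' : Subgroup Γ) : Set (Γ → Torus) :=
  {x | x ∈ XSet f ∧ ∀ γ ∈ Γ', lsh γ x = x}

/-- Left `(K,ε)`-invariance of a finite set `Q ⊆ Γ`. -/
def LeftInv [DecidableEq Γ] (K : Finset Γ) (ε : ℝ) (Q : Finset Γ) : Prop :=
  ∑ γ ∈ K, (((Q.image fun q => γ * q) ∆ Q).card : ℝ) / (Q.card : ℝ) < ε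

/-- Right `(K,ε)`-invariance of a finite set `Q ⊆ Γ`. -/
def RightInv [DecidableEq Γ] (K : Finset Γ) (ε : ℝ) (Q : Finset Γ) : Prop :=
  ∑ γ ∈ K, (((Q.image fun q => q * γ) ∆ Q).card : ℝ) / (Q.card : ℝ) < ε

/-- Amenability: existence of a left Følner sequence. -/
def Amenable (Γ : Type*) [Group Γ] [DecidableEq Γ] : Prop :=
  ∃ Q : ℕ → Finset Γ, (∀ n, (Q n).Nonempty) ∧
    ∀ (K : Finset Γ) (ε : ℝ), 0 < ε → ∃ N : ℕ, ∀ n ≥ N, LeftInv K ε (Q n)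

/-- Residual finiteness: there is a sequence of finite-index normal subgroups with
trivial intersection. -/
def ResFinite (Γ : Type*) [Group Γ] : Prop :=
  ∃ N : ℕ → Subgroup Γ, (∀ n, (N n).Normal ∧ (N n).FiniteIndex) ∧
    ∀ γ : Γ, (∀ n, γ ∈ N n) → γ = 1

/-- `Q` is a fundamental domain for the coset space `Γ/Γ'`:
`{γQ : γ ∈ Γ'}` is a partition of `Γ`. -/
def IsFundDomain (Γ' : Subgroup Γ) (Q : Finset Γ) : Prop :=
  ∀ x : Γ, ∃! p : Γ × Γ, p.1 ∈ Γ' ∧ p.2 ∈ Q ∧ p.1 * p.2 = x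

/-- `lim_n Γ_n = {1}`: for every finite `K ⊆ Γ` eventually `Γ_n ∩ K⁻¹K = {1}`. -/
def LimTriv (N : ℕ → Subgroup Γ) : Prop :=
  ∀ K : Finset Γ, ∃ M : ℕ, ∀ n ≥ M, ∀ γ ∈ N n, (∃ a ∈ K, ∃ b ∈ K, γ = a⁻¹ * b) → γ = 1

/-- The word ball `B_F(n)` of radius `n` with respect to a generating set `F`. -/
def BallF (F : Finset Γ) (n : ℕ) : Set Γ :=
  {γ | ∃ l : List Γ, l.length ≤ n ∧ (∀ a ∈ l, a ∈ F) ∧ l.prod = γ}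

end GroupDefs

/-- The Hilbert space `ℓ²(Γ,ℂ)`. -/
abbrev H2 (Γ : Type*) : Type _ := lp (fun _ : Γ => ℂ) 2

section Hilbert

variable {Γ : Type*} [Group Γ]

open Classical in
/-- The standard basis vector `δ₁ ∈ ℓ²(Γ,ℂ)`. -/
def deltaL2 : H2 Γ := lp.single 2 (1 : Γ) (1 : ℂ)

/-- `A` is the right-convolution operator `ρ_f` on `ℓ²(Γ,ℂ)`,
`(ρ_f w)_γ = Σ_{γ'} w_{γγ'} f_{γ'}`. -/
def IsRho (f : Γ → ℂ) (A : H2 Γ →L[ℂ] H2 Γ) : Prop :=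
  ∀ (w : H2 Γ) (γ : Γ), (A w : Γ → ℂ) γ = ∑' γ' : Γ, (w : Γ → ℂ) (γ * γ') * f γ'

/-- The von Neumann trace of `log (A A*)`, i.e. `tr_{NΓ}(log (A A*)) = (log(AA*) δ₁)(1)`,
where `log` is given by the continuous functional calculus. -/
def trLogAAstar (A : H2 Γ →L[ℂ] H2 Γ) : ℝ :=
  (((cfc (instCFC := IsSelfAdjoint.instContinuousFunctionalCalculus) Real.log (A * star A)) deltaL2 : Γ → ℂ) (1 : Γ)).re

/-- The Fuglede–Kadison determinant `det_{NΓ} A = exp(½ tr(log (A A*)))`. -/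
def detFK (A : H2 Γ →L[ℂ] H2 Γ) : ℝ := Real.exp (2⁻¹ * trLogAAstar A)

open Classical in
/-- `f^{(n)} : Γ/Γ_n → ℂ`, integration along the fibres: `f^{(n)}(δ) = Σ_{γ ∈ δ} f_γ`. -/
def fQuot (f : Γ → ℂ) (H : Subgroup Γ) : (Γ ⧸ H) → ℂ :=
  fun δ => ∑' γ : Γ, if (QuotientGroup.mk γ : Γ ⧸ H) = δ then f γ else 0

open Classical in
/-- The indicator of the identity coset in `ℓ²(Γ/Γ_n, ℂ)`. -/
def deltaQuot (H : Subgroup Γ) : (Γ ⧸ H) → ℂ :=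
  fun δ => if δ = (QuotientGroup.mk (1 : Γ) : Γ ⧸ H) then 1 else 0

end Hilbert


/-!
Let `x = η(w*)`. Since `ρ_f(w*) = (f·w)* = δ₁` is integer valued, `x ∈ X_f`, and `x` is
homoclinic because `w ∈ ℓ¹`. Conversely, a homoclinic `y ∈ X_f` lifts to `u ∈ ℓ∞(Γ)` with
`|u_γ| = ‖y_γ‖`, so `u → 0`. Then `v = ρ_f u` is integer valued (as `y ∈ X_f`) and tends to `0`,
hence is finitely supported, and `w·f = δ₁` gives `u = ρ_w v`. Reducing mod 1,
`y = Σ_t v_t · α_f^t x`.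
-/

open Filter Topology

lemma Torus.exists_coe_eq_and_abs_eq_norm (t : Torus) : ∃ r : ℝ, (r : Torus) = t ∧ |r| = ‖t‖ := by
  obtain ⟨x, rfl⟩ := QuotientAddGroup.mk_surjective t
  refine ⟨x - round x, by rw [AddCircle.coe_sub]; simp, ?_⟩
  exact (UnitAddCircle.norm_eq (x := x)).symm

lemma Bdd.summable_mul {ι : Type*} {u w : ι → ℝ} (hu : Bdd u) (hw : Summable w) :
    Summable fun i => u i * w i := by
  obtain ⟨C, hC⟩ := hu
  refine Summable.of_norm_bounded (hw.norm.mul_left C) fun i => ?_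
  rw [norm_mul]
  exact mul_le_mul_of_nonneg_right (hC i) (norm_nonneg _)

lemma exists_bdd_etaT_eq_of_tendsto {ι : Type*} {y : ι → Torus} (hy : Tendsto y cofinite (𝓝 0)) :
    ∃ u : ι → ℝ, etaT u = y ∧ Bdd u ∧ Tendsto u cofinite (𝓝 0) := by
  choose u hu_coe hu_abs using fun i => Torus.exists_coe_eq_and_abs_eq_norm (y i)
  refine ⟨u, funext hu_coe, ⟨1 / 2, fun i => ?_⟩, ?_⟩
  · simpa [hu_abs] using AddCircle.norm_le_half_period (p := (1 : ℝ)) (x := y i) one_ne_zero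
  · rw [tendsto_zero_iff_norm_tendsto_zero] at hy ⊢
    simpa only [Real.norm_eq_abs, hu_abs] using hy

lemma etaT_eq_zero_iff {ι : Type*} {u : ι → ℝ} : etaT u = 0 ↔ IntValued u := by
  simp only [funext_iff, etaT, Pi.zero_apply, IntValued]
  refine forall_congr' fun i => ?_
  rw [AddCircle.coe_eq_zero_iff]
  simp [eq_comm]

lemma IntValued.finite_support {ι : Type*} {v : ι → ℝ} (hv : IntValued v)
    (hlim : Tendsto v cofinite (𝓝 0)) : (Function.support v).Finite := by
  refine (hlim (Ioo_mem_nhds neg_one_lt_zero one_pos)).subset fun i hi ⟨h₁, h₂⟩ => ?_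
  obtain ⟨k, hk⟩ := hv i
  rw [hk] at h₁ h₂
  have : k = 0 := by
    have : -1 < k := by exact_mod_cast h₁
    have : k < 1 := by exact_mod_cast h₂
    omega
  exact hi (by rw [hk, this, Int.cast_zero])

section Development

variable {Γ : Type*} [Group Γ]

lemma rhoInf_apply (f : Γ →₀ ℤ) (u : Γ → ℝ) (γ : Γ) :
    rhoInf f u γ = ∑ δ ∈ f.support, (f δ : ℝ) * u (γ * δ) := rfl

lemma rhoT_etaT (f : Γ →₀ ℤ) (u : Γ → ℝ) : rhoT f (etaT u) = etaT (rhoInf f u) := by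
  funext γ
  simp [rhoT, etaT, rhoInf, Finsupp.sum]

lemma rhoT_lsh (f : Γ →₀ ℤ) (δ : Γ) (x : Γ → Torus) : rhoT f (lsh δ x) = lsh δ (rhoT f x) := by
  funext γ
  simp [rhoT, lsh, mul_assoc]

lemma lsh_mem_XSet {f : Γ →₀ ℤ} {x : Γ → Torus} (hx : x ∈ XSet f) (δ : Γ) :
    lsh δ x ∈ XSet f := by
  show rhoT f _ = 0
  rw [rhoT_lsh, hx]
  rfl

lemma lsh_mul (a b : Γ) (x : Γ → Torus) : lsh a (lsh b x) = lsh (a * b) x := by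
  funext γ
  simp [lsh, mul_assoc]

lemma IsHomoclinic.tendsto_cofinite {x : Γ → Torus} (hx : IsHomoclinic x) :
    Tendsto x cofinite (𝓝 0) := by
  simpa [Function.comp_def, lsh] using
    (tendsto_pi_nhds.mp hx 1).comp (inv_injective (G := Γ)).tendsto_cofinite

lemma IsHomoclinic.lsh {x : Γ → Torus} (hx : IsHomoclinic x) (δ : Γ) :
    IsHomoclinic (lsh δ x) := by
  simp only [IsHomoclinic, lsh_mul]
  exact hx.comp (mul_left_injective δ).tendsto_cofinite

lemma isHomoclinic_etaT {u : Γ → ℝ} (hu : Tendsto u cofinite (𝓝 0)) : IsHomoclinic (etaT u) := by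
  refine tendsto_pi_nhds.mpr fun γ' => ?_
  have hinj : Function.Injective fun γ : Γ => γ⁻¹ * γ' := fun a b h => by simpa using h
  have := ((AddCircle.continuous_mk' (1 : ℝ)).tendsto 0).comp (hu.comp hinj.tendsto_cofinite)
  simpa [Function.comp_def, lsh, etaT] using this

def rhoTHom (f : Γ →₀ ℤ) : (Γ → Torus) →+ (Γ → Torus) where
  toFun := rhoT f
  map_zero' := by funext γ; simp [rhoT]
  map_add' x y := by funext γ; simp [rhoT, Finsupp.sum, Finset.sum_add_distrib]

def homoclinicSubgroup : AddSubgroup (Γ → Torus) where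
  carrier := {x | IsHomoclinic x}
  zero_mem' := tendsto_const_nhds
  add_mem' {x y} hx hy := by
    have := hx.add hy
    rwa [add_zero] at this
  neg_mem' {x} hx := by
    have := hx.neg
    rwa [neg_zero] at this

def homoclinicGroup (f : Γ →₀ ℤ) : AddSubgroup (Γ → Torus) :=
  (rhoTHom f).ker ⊓ homoclinicSubgroup

lemma mem_homoclinicGroup {f : Γ →₀ ℤ} {x : Γ → Torus} :
    x ∈ homoclinicGroup f ↔ x ∈ XSet f ∧ IsHomoclinic x := Iff.rfl

lemma conv_apply_eq_tsum (g h : Γ → ℝ) (β : Γ) : conv g h β = ∑' δ, g (β * δ⁻¹) * h δ := by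
  rw [conv, ← ((Equiv.inv Γ).trans (Equiv.mulLeft β)).tsum_eq]
  simp

lemma conv_fR_left (f : Γ →₀ ℤ) (w : Γ → ℝ) (β : Γ) :
    conv (fR f) w β = ∑ δ ∈ f.support, (f δ : ℝ) * w (δ⁻¹ * β) :=
  tsum_eq_sum fun δ hδ => by simp [fR, Finsupp.notMem_support_iff.mp hδ]

lemma conv_fR_right (f : Γ →₀ ℤ) (w : Γ → ℝ) (β : Γ) :
    conv w (fR f) β = ∑ δ ∈ f.support, (f δ : ℝ) * w (β * δ⁻¹) := by
  rw [conv_apply_eq_tsum]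
  exact (tsum_eq_sum fun δ hδ => by simp [fR, Finsupp.notMem_support_iff.mp hδ]).trans
    (Finset.sum_congr rfl fun δ _ => mul_comm _ _)

lemma rhoInf_star (f : Γ →₀ ℤ) (w : Γ → ℝ) (γ : Γ) :
    rhoInf f (fun γ => w γ⁻¹) γ = conv (fR f) w γ⁻¹ := by
  simp [rhoInf, conv_fR_left, Finsupp.sum]

lemma intValued_deltaOne : IntValued (deltaOne : Γ → ℝ) := by
  intro γ
  by_cases h : γ = 1
  · exact ⟨1, by simp [deltaOne, h]⟩
  · exact ⟨0, by simp [deltaOne, h]⟩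

lemma etaT_star_mem_XSet {f : Γ →₀ ℤ} {w : Γ → ℝ} (hfw : conv (fR f) w = deltaOne) :
    etaT (fun γ => w γ⁻¹) ∈ XSet f := by
  show rhoT f _ = 0
  rw [rhoT_etaT, etaT_eq_zero_iff]
  intro γ
  rw [rhoInf_star, hfw]
  exact intValued_deltaOne _

lemma tendsto_rhoInf (f : Γ →₀ ℤ) {u : Γ → ℝ} (hu : Tendsto u cofinite (𝓝 0)) :
    Tendsto (rhoInf f u) cofinite (𝓝 0) := by
  have := tendsto_finsetSum f.support fun δ (_ : δ ∈ f.support) =>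
    (hu.comp (mul_left_injective δ).tendsto_cofinite).const_mul (f δ : ℝ)
  simpa only [Finset.sum_const_zero, mul_zero, Function.comp_def, ← rhoInf_apply] using this

lemma rhoL1_rhoInf {f : Γ →₀ ℤ} {w u : Γ → ℝ} (hw : Summable w)
    (hwf : conv w (fR f) = deltaOne) (hu : Bdd u) : rhoL1 w (rhoInf f u) = u := by
  funext γ
  obtain ⟨C, hC⟩ := hu
  have hsum : ∀ δ : Γ, Summable fun β => (f δ : ℝ) * (u (γ * β) * w (β * δ⁻¹)) := fun δ =>
    ((show Bdd fun β => u (γ * β) from ⟨C, fun β => hC _⟩).summable_mul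
      (hw.comp_injective (mul_left_injective δ⁻¹))).mul_left _
  have hsum' : ∀ δ : Γ, Summable fun γ' => (f δ : ℝ) * (u (γ * (γ' * δ)) * w γ') := fun δ =>
    ((show Bdd fun γ' => u (γ * (γ' * δ)) from ⟨C, fun β => hC _⟩).summable_mul hw).mul_left _
  symm
  calc u γ = ∑' β, u (γ * β) * deltaOne β := by
          rw [tsum_eq_single 1 fun β hβ => by simp [deltaOne, hβ]]
          simp [deltaOne]
    _ = ∑' β, ∑ δ ∈ f.support, (f δ : ℝ) * (u (γ * β) * w (β * δ⁻¹)) := by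
          simp only [← hwf, conv_fR_right, Finset.mul_sum]
          exact tsum_congr fun β => Finset.sum_congr rfl fun δ _ => by ring
    _ = ∑ δ ∈ f.support, ∑' γ', (f δ : ℝ) * (u (γ * (γ' * δ)) * w γ') := by
          rw [Summable.tsum_finsetSum fun δ _ => hsum δ]
          refine Finset.sum_congr rfl fun δ _ => ?_
          rw [← (Equiv.mulRight δ).tsum_eq]
          simp
    _ = rhoL1 w (rhoInf f u) γ := by
          rw [← Summable.tsum_finsetSum fun δ _ => hsum' δ]
          simp only [rhoL1, rhoInf_apply, Finset.sum_mul]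
          exact tsum_congr fun γ' => Finset.sum_congr rfl fun δ _ => by rw [← mul_assoc γ]; ring

lemma rhoL1_apply_eq_tsum (h v : Γ → ℝ) (γ : Γ) : rhoL1 h v γ = ∑' t, v t * h (γ⁻¹ * t) := by
  conv_rhs => rw [← (Equiv.mulLeft γ).tsum_eq]
  simp [rhoL1]

lemma etaT_rhoL1_mem_closure (w : Γ → ℝ) {v : Γ → ℝ} (hv : IntValued v)
    (hfin : (Function.support v).Finite) :
    etaT (rhoL1 w v) ∈
      AddSubgroup.closure (Set.range fun γ : Γ => lsh γ (etaT fun γ' : Γ => w γ'⁻¹)) := by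
  classical
  choose k hk using hv
  have hy : etaT (rhoL1 w v) = ∑ t ∈ hfin.toFinset, k t • lsh t (etaT fun γ' => w γ'⁻¹) := by
    funext γ
    rw [etaT, rhoL1_apply_eq_tsum, tsum_eq_sum (s := hfin.toFinset) fun t ht => by
      simp [Function.notMem_support.mp (by simpa using ht)]]
    simp [lsh, etaT, hk, mul_inv_rev, ← zsmul_eq_mul]
  rw [hy]
  exact AddSubgroup.sum_mem _ fun t _ =>
    AddSubgroup.zsmul_mem _ (AddSubgroup.subset_closure (Set.mem_range_self t)) _

end Development

theorem statement3_general {Γ : Type*} [Group Γ]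
    (f : Γ →₀ ℤ) (w : Γ → ℝ) (hw : IsL1Inverse (fR f) w) :
    etaT (fun γ : Γ => w γ⁻¹) ∈ XSet f ∧
    IsHomoclinic (etaT fun γ : Γ => w γ⁻¹) ∧
    (AddSubgroup.closure
        (Set.range fun γ : Γ => lsh γ (etaT fun γ' : Γ => w γ'⁻¹)) : Set (Γ → Torus)) =
      {x | x ∈ XSet f ∧ IsHomoclinic x} := by
  obtain ⟨hw_summable, hfw, hwf⟩ := hw
  have hxX := etaT_star_mem_XSet hfw
  have hxH : IsHomoclinic (etaT fun γ : Γ => w γ⁻¹) :=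
    isHomoclinic_etaT ((hw_summable.comp_injective inv_injective).tendsto_cofinite_zero)
  refine ⟨hxX, hxH, subset_antisymm ?_ fun y hy => ?_⟩
  · exact SetLike.coe_subset_coe.mpr <| (AddSubgroup.closure_le (homoclinicGroup f)).mpr <|
      Set.range_subset_iff.mpr fun γ => mem_homoclinicGroup.mpr ⟨lsh_mem_XSet hxX γ, hxH.lsh γ⟩
  · obtain ⟨hyX, hyH⟩ := hy
    obtain ⟨u, rfl, hu_bdd, hu_lim⟩ := exists_bdd_etaT_eq_of_tendsto hyH.tendsto_cofinite
    have hv_int : IntValued (rhoInf f u) := etaT_eq_zero_iff.mp (by rw [← rhoT_etaT]; exact hyX)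
    rw [← rhoL1_rhoInf hw_summable hwf hu_bdd]
    exact etaT_rhoL1_mem_closure w hv_int (hv_int.finite_support (tendsto_rhoInf f hu_lim))

/-- Let `Γ` be a countable residually finite discrete group and
`f ∈ ℤΓ` such that `α_f` is expansive, i.e. `f` is invertible in `ℓ¹(Γ)` with inverse
`w = w_f^Δ`. Then `x_f^Δ = η(w*) ∈ X_f` is a fundamental homoclinic point of `α_f`:
it is homoclinic, and the homoclinic group `Δ(X_f)` is generated by its orbit. -/
theorem statement3 {Γ : Type*} [Group Γ] [Countable Γ] (hRF : ResFinite Γ)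
    (f : Γ →₀ ℤ) (w : Γ → ℝ) (hw : IsL1Inverse (fR f) w) :
    etaT (fun γ : Γ => w γ⁻¹) ∈ XSet f ∧
    IsHomoclinic (etaT fun γ : Γ => w γ⁻¹) ∧
    (AddSubgroup.closure
        (Set.range fun γ : Γ => lsh γ (etaT fun γ' : Γ => w γ'⁻¹)) : Set (Γ → Torus)) =
      {x | x ∈ XSet f ∧ IsHomoclinic x} :=
  statement3_general f w hw

end
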